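/- arXiv:2504.11728 — 3 statements merged into one kernel-verified Lean document; each statement's English description precedes it below -/
import Mathlib

section
/- Let M = (U, 𝓘) be a matroid with finite ground set and weight function w : U → ℝ. Suppose that to every real number ω a minimum basis f(ω) of M is assigned. Then the set B = {e ∈ U : e ∈ f(w(e))} (i.e., the union over the distinct weights ω_1,…,ω_β occurring in minimum bases of the weight-ω_j part of f(ω_j)) is a minimum basis of M. -/
variable {α : Type*}

open Set

/-- The total weight of a set of elements. -/
noncomputable def wsum (w : α → ℝ) (S : Set α) : ℝ := ∑ᶠ x ∈ S, w x

/-- `B` is a minimum-weight basis of the matroid `M` w.r.t. the weight function `w`. -/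
def MinBase (M : Matroid α) (w : α → ℝ) (B : Set α) : Prop :=
  M.IsBase B ∧ ∀ B', M.IsBase B' → wsum w B ≤ wsum w B'

/-- `B ∈ 𝓑*(I,O)`: `B` is a minimum basis containing all of `I` and avoiding `O`. -/
def BStar (M : Matroid α) (w : α → ℝ) (I O B : Set α) : Prop :=
  MinBase M w B ∧ I ⊆ B ∧ B ∩ O = ∅

/-- `(x, y)` is an exchange for the basis `B`. -/
def IsExchange (M : Matroid α) (B : Set α) (x y : α) : Prop :=
  x ∈ B ∧ y ∉ B ∧ M.IsBase ((B \ {x}) ∪ {y})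

/-- An element is relevant if it belongs to some minimum basis. -/
def Relevant (M : Matroid α) (w : α → ℝ) (x : α) : Prop :=
  ∃ B, MinBase M w B ∧ x ∈ B

lemma wsum_eq_sum (w : α → ℝ) {S : Set α} (hS : S.Finite) :
    wsum w S = ∑ x ∈ hS.toFinset, w x := by
  rw [wsum, ← finsum_mem_coe_finset]
  congr 1
  simp

lemma wsum_insert (w : α → ℝ) {S : Set α} (hS : S.Finite) {e : α} (he : e ∉ S) :
    wsum w (insert e S) = w e + wsum w S := by
  classical
  rw [wsum_eq_sum w (hS.insert e), wsum_eq_sum w hS, Set.Finite.toFinset_insert]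
  exact Finset.sum_insert (by simpa using he)

lemma wsum_union (w : α → ℝ) {S T : Set α} (hS : S.Finite) (hT : T.Finite)
    (h : Disjoint S T) :
    wsum w (S ∪ T) = wsum w S + wsum w T := by
  classical
  rw [wsum_eq_sum w (hS.union hT), wsum_eq_sum w hS, wsum_eq_sum w hT,
    Set.Finite.toFinset_union]
  exact Finset.sum_union (Set.Finite.disjoint_toFinset.2 h)

lemma wsum_const {w : α → ℝ} {c : ℝ} {S : Set α} (hS : S.Finite)
    (h : ∀ x ∈ S, w x = c) :
    wsum w S = c * S.ncard := by
  rw [wsum_eq_sum w hS, Finset.sum_congr rfl (fun x hx => h x (by simpa using hx))]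
  rw [Finset.sum_const, ncard_eq_toFinset_card S hS]
  simp [mul_comm]

lemma minbase_span {M : Matroid α} (hfin : M.E.Finite) {w : α → ℝ} {B : Set α}
    (hB : MinBase M w B) (t : ℝ) :
    {e | e ∈ M.E ∧ w e ≤ t} ⊆ M.closure (B ∩ {e | w e ≤ t}) := by
  rintro e ⟨heE, het⟩
  by_contra hecl
  have hBE : B ⊆ M.E := hB.1.subset_ground
  have hsubE : B ∩ {e | w e ≤ t} ⊆ M.E := inter_subset_left.trans hBE
  have hIindep : M.Indep (B ∩ {e | w e ≤ t}) := hB.1.indep.subset inter_subset_left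
  have heB : e ∉ B := fun h => hecl (M.subset_closure _ hsubE ⟨h, het⟩)
  have heI : M.Indep (insert e (B ∩ {e | w e ≤ t})) := by
    rw [hIindep.insert_indep_iff]
    exact Or.inl ⟨heE, hecl⟩
  obtain ⟨B', hB', hIB', hB'sub⟩ := heI.exists_isBase_subset_union_isBase hB.1
  have hB'B : B' \ B = {e} := by
    apply subset_antisymm
    · rintro x ⟨hx1, hx2⟩
      rcases hB'sub hx1 with h | h
      · rcases h with h | h
        · exact h
        · exact absurd h.1 hx2
      · exact absurd h hx2
    · exact singleton_subset_iff.mpr ⟨hIB' (mem_insert _ _), heB⟩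
  have hcard : (B \ B').encard = 1 := by
    rw [hB.1.encard_diff_comm hB', hB'B, encard_singleton]
  obtain ⟨y, hy⟩ := encard_eq_one.mp hcard
  have hyBB' : y ∈ B \ B' := by rw [hy]; exact rfl
  have hyB : y ∈ B := hyBB'.1
  have hynB' : y ∉ B' := hyBB'.2
  have hyt : t < w y := by
    by_contra h
    exact hynB' (hIB' (mem_insert_of_mem _ ⟨hyB, not_lt.mp h⟩))
  have hB'eq : B' = insert e (B \ {y}) := by
    ext x
    constructor
    · intro hx
      by_cases hxe : x = e
      · exact hxe ▸ mem_insert _ _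
      · have hxB : x ∈ B := by
          rcases hB'sub hx with h | h
          · rcases h with h | h
            · exact absurd h hxe
            · exact h.1
          · exact h
        refine mem_insert_of_mem _ ⟨hxB, ?_⟩
        intro hxy
        rw [mem_singleton_iff] at hxy
        exact hynB' (hxy ▸ hx)
    · rintro (rfl | ⟨hxB, hxy⟩)
      · exact hIB' (mem_insert _ _)
      · by_contra hxB'
        have hmem : x ∈ B \ B' := ⟨hxB, hxB'⟩
        rw [hy, mem_singleton_iff] at hmem
        exact hxy (hmem ▸ rfl)
  have hBfin : B.Finite := hfin.subset hBE
  have hBy : (B \ {y}).Finite := hBfin.diff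
  have h1 : wsum w B' = w e + wsum w (B \ {y}) := by
    rw [hB'eq]
    exact wsum_insert w hBy (fun h => heB h.1)
  have h2 : wsum w B = w y + wsum w (B \ {y}) := by
    nth_rewrite 1 [show B = insert y (B \ {y}) by
      rw [insert_diff_singleton, insert_eq_of_mem hyB]]
    exact wsum_insert w hBy (fun h => h.2 rfl)
  have := hB.2 B' hB'
  linarith

lemma minbase_prefix_basis {M : Matroid α} (hfin : M.E.Finite) {w : α → ℝ} {B : Set α}
    (hB : MinBase M w B) (t : ℝ) :
    M.IsBasis (B ∩ {e | w e ≤ t}) {e | e ∈ M.E ∧ w e ≤ t} :=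
  (hB.1.indep.subset inter_subset_left).isBasis_of_subset_of_subset_closure
    (fun x hx => ⟨hB.1.subset_ground hx.1, hx.2⟩) (minbase_span hfin hB t)

lemma minbase_prefix_ncard {M : Matroid α} (hfin : M.E.Finite) {w : α → ℝ}
    {B1 B2 : Set α} (h1 : MinBase M w B1) (h2 : MinBase M w B2) (t : ℝ) :
    (B1 ∩ {e | w e ≤ t}).ncard = (B2 ∩ {e | w e ≤ t}).ncard := by
  have h := (minbase_prefix_basis hfin h1 t).encard_eq_encard
    (minbase_prefix_basis hfin h2 t)
  rw [Set.ncard_def, h, ← Set.ncard_def]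

/-- If to every real weight `ω` a minimum basis `f ω` is assigned, then the set of elements
`e` of the ground set with `e ∈ f (w e)` is itself a minimum basis. -/
theorem stmt_6 (M : Matroid α) (hfin : M.E.Finite) (w : α → ℝ)
    (f : ℝ → Set α) (hf : ∀ ω : ℝ, MinBase M w (f ω)) :
    MinBase M w {e | e ∈ M.E ∧ e ∈ f (w e)} := by
  classical
  set B0 : Set α := {e | e ∈ M.E ∧ e ∈ f (w e)} with hB0def
  have hB0E : B0 ⊆ M.E := fun x hx => hx.1
  have hWfin : (w '' M.E).Finite := hfin.image w
  have key : ∀ n : ℕ, ∀ t : ℝ, ({s ∈ w '' M.E | s ≤ t}).ncard = n →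
      M.IsBasis (B0 ∩ {e | w e ≤ t}) {e | e ∈ M.E ∧ w e ≤ t} ∧
      wsum w (B0 ∩ {e | w e ≤ t}) = wsum w (f 0 ∩ {e | w e ≤ t}) := by
    intro n
    induction n using Nat.strong_induction_on with
    | _ n IH =>
    intro t hn
    by_cases hne : ({s ∈ w '' M.E | s ≤ t}).Nonempty
    · -- nonempty case
      have hSfin : ({s ∈ w '' M.E | s ≤ t}).Finite := hWfin.subset (sep_subset _ _)
      have hne' : hSfin.toFinset.Nonempty := by
        rwa [Set.Finite.toFinset_nonempty]
      set t' := hSfin.toFinset.max' hne' with ht'def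
      have ht'mem : t' ∈ {s ∈ w '' M.E | s ≤ t} := by
        have := hSfin.toFinset.max'_mem hne'
        rwa [Set.Finite.mem_toFinset] at this
      have ht'max : ∀ s ∈ w '' M.E, s ≤ t → s ≤ t' := fun s hs hst =>
        hSfin.toFinset.le_max' s (by rw [Set.Finite.mem_toFinset]; exact ⟨hs, hst⟩)
      have ht't : t' ≤ t := ht'mem.2
      -- choose s'
      have hex : ∃ s', s' < t' ∧ ∀ s ∈ w '' M.E, s < t' → s ≤ s' := by
        by_cases h2 : ({s ∈ w '' M.E | s < t'}).Nonempty
        · have h2fin : ({s ∈ w '' M.E | s < t'}).Finite := hWfin.subset (sep_subset _ _)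
          have h2ne : h2fin.toFinset.Nonempty := by rwa [Set.Finite.toFinset_nonempty]
          refine ⟨h2fin.toFinset.max' h2ne, ?_, ?_⟩
          · have := h2fin.toFinset.max'_mem h2ne
            rw [Set.Finite.mem_toFinset] at this
            exact this.2
          · intro s hs hst
            exact h2fin.toFinset.le_max' s
              (by rw [Set.Finite.mem_toFinset]; exact ⟨hs, hst⟩)
        · exact ⟨t' - 1, by linarith, fun s hs hst => (h2 ⟨s, hs, hst⟩).elim⟩
      obtain ⟨s', hs't', hs'max⟩ := hex
      -- induction hypothesis at s'
      have hsub0 : {s ∈ w '' M.E | s ≤ s'} ⊆ {s ∈ w '' M.E | s ≤ t} := by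
        rintro s ⟨hs1, hs2⟩
        exact ⟨hs1, le_trans hs2 (le_trans hs't'.le ht't)⟩
      have hssub : {s ∈ w '' M.E | s ≤ s'} ⊂ {s ∈ w '' M.E | s ≤ t} := by
        rw [Set.ssubset_iff_of_subset hsub0]
        exact ⟨t', ht'mem, fun h => absurd h.2 (not_le.mpr hs't')⟩
      have hlt : ({s ∈ w '' M.E | s ≤ s'}).ncard < n :=
        hn ▸ Set.ncard_lt_ncard hssub hSfin
      obtain ⟨ihbasis, ihwsum⟩ := IH _ hlt s' rfl
      -- splitting facts
      have hle_t' : ∀ e ∈ M.E, w e ≤ t → w e ≤ t' := fun e he h =>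
        ht'max _ ⟨e, he, rfl⟩ h
      have hsplit : ∀ X : Set α, X ⊆ M.E → ∀ r : ℝ, t' ≤ r →
          (∀ e ∈ X, w e ≤ r → w e ≤ t') →
          X ∩ {e | w e ≤ r} = (X ∩ {e | w e ≤ s'}) ∪ (X ∩ {e | w e = t'}) := by
        intro X hX r ht'r hcond
        ext x
        constructor
        · rintro ⟨hxX, hxr⟩
          rcases eq_or_lt_of_le (hcond x hxX hxr) with h | h
          · exact Or.inr ⟨hxX, h⟩
          · exact Or.inl ⟨hxX, hs'max _ ⟨x, hX hxX, rfl⟩ h⟩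
        · rintro (⟨hxX, hx⟩ | ⟨hxX, hx⟩)
          · exact ⟨hxX, by simp only [mem_setOf_eq] at hx ⊢; linarith⟩
          · exact ⟨hxX, by simp only [mem_setOf_eq] at hx ⊢; linarith⟩
      have hdisj : ∀ X : Set α,
          Disjoint (X ∩ {e | w e ≤ s'}) (X ∩ {e | w e = t'}) := by
        intro X
        rw [disjoint_left]
        rintro a ⟨_, ha⟩ ⟨_, hb⟩
        simp only [mem_setOf_eq] at ha hb
        linarith
      have hfinsub : ∀ X : Set α, X ⊆ M.E → X.Finite := fun X hX => hfin.subset hX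
      -- B0 split
      have he1 : B0 ∩ {e | w e ≤ t} =
          (B0 ∩ {e | w e ≤ s'}) ∪ (f t' ∩ {e | w e = t'}) := by
        have h := hsplit B0 hB0E t (le_trans hs't'.le ht't |>.trans (le_refl t) |> fun _ => ht't) ?_
        · rw [h]
          congr 1
          ext x
          constructor
          · rintro ⟨hxB, hx⟩
            simp only [mem_setOf_eq] at hx
            exact ⟨by have := hxB.2; rwa [hx] at this, hx⟩
          · rintro ⟨hxf, hx⟩
            simp only [mem_setOf_eq] at hx
            exact ⟨⟨(hf t').1.subset_ground hxf, by rwa [hx]⟩, hx⟩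
        · exact fun e he h => hle_t' e (hB0E he) h
      have he2 : f 0 ∩ {e | w e ≤ t} = (f 0 ∩ {e | w e ≤ s'}) ∪ (f 0 ∩ {e | w e = t'}) :=
        hsplit (f 0) (hf 0).1.subset_ground t ht't
          (fun e he h => hle_t' e ((hf 0).1.subset_ground he) h)
      have he3 : ∀ g : Set α, g ⊆ M.E →
          g ∩ {e | w e ≤ t'} = (g ∩ {e | w e ≤ s'}) ∪ (g ∩ {e | w e = t'}) :=
        fun g hg => hsplit g hg t' (le_refl _) (fun e _ h => h)
      -- counting
      have hcnt : ∀ g1 g2 : Set α, MinBase M w g1 → MinBase M w g2 →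
          (g1 ∩ {e | w e = t'}).ncard = (g2 ∩ {e | w e = t'}).ncard := by
        intro g1 g2 hg1 hg2
        have a1 := minbase_prefix_ncard hfin hg1 hg2 t'
        have a2 := minbase_prefix_ncard hfin hg1 hg2 s'
        rw [he3 g1 hg1.1.subset_ground, he3 g2 hg2.1.subset_ground,
          ncard_union_eq (hdisj g1)
            (hfinsub _ (inter_subset_left.trans hg1.1.subset_ground))
            (hfinsub _ (inter_subset_left.trans hg1.1.subset_ground)),
          ncard_union_eq (hdisj g2)
            (hfinsub _ (inter_subset_left.trans hg2.1.subset_ground))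
            (hfinsub _ (inter_subset_left.trans hg2.1.subset_ground))] at a1
        omega
      have hcard_t' : (f t' ∩ {e | w e = t'}).ncard = (f 0 ∩ {e | w e = t'}).ncard :=
        hcnt _ _ (hf t') (hf 0)
      -- ncard of L parts
      have hLcard : (B0 ∩ {e | w e ≤ s'}).ncard = (f 0 ∩ {e | w e ≤ s'}).ncard := by
        have h := ihbasis.encard_eq_encard (minbase_prefix_basis hfin (hf 0) s')
        rw [Set.ncard_def, h, ← Set.ncard_def]
      -- abbreviations and finiteness
      have hB0L : (B0 ∩ {e | w e ≤ s'}).Finite := hfinsub _ (inter_subset_left.trans hB0E)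
      have hft'C : (f t' ∩ {e | w e = t'}).Finite :=
        hfinsub _ (inter_subset_left.trans (hf t').1.subset_ground)
      have hf0L : (f 0 ∩ {e | w e ≤ s'}).Finite :=
        hfinsub _ (inter_subset_left.trans (hf 0).1.subset_ground)
      have hf0C : (f 0 ∩ {e | w e = t'}).Finite :=
        hfinsub _ (inter_subset_left.trans (hf 0).1.subset_ground)
      -- wsum equality
      have hw1 : wsum w (f t' ∩ {e | w e = t'}) = wsum w (f 0 ∩ {e | w e = t'}) := by
        rw [wsum_const hft'C (fun x hx => hx.2), wsum_const hf0C (fun x hx => hx.2),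
          hcard_t']
      have hwsum : wsum w (B0 ∩ {e | w e ≤ t}) = wsum w (f 0 ∩ {e | w e ≤ t}) := by
        rw [he1, he2, wsum_union w hB0L hft'C ?_, wsum_union w hf0L hf0C (hdisj _),
          ihwsum, hw1]
        · rw [disjoint_left]
          rintro a ⟨_, ha⟩ ⟨_, hb⟩
          simp only [mem_setOf_eq] at ha hb
          linarith
      -- the basis part
      have hXE : B0 ∩ {e | w e ≤ t} ⊆ M.E := inter_subset_left.trans hB0E
      have hXA : B0 ∩ {e | w e ≤ t} ⊆ {e | e ∈ M.E ∧ w e ≤ t} :=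
        fun x hx => ⟨hB0E hx.1, hx.2⟩
      have hLsub : B0 ∩ {e | w e ≤ s'} ⊆ B0 ∩ {e | w e ≤ t} := by
        rintro x ⟨hx1, hx2⟩
        simp only [mem_setOf_eq] at hx2
        exact ⟨hx1, by simp only [mem_setOf_eq]; linarith⟩
      have hspan : {e | e ∈ M.E ∧ w e ≤ t} ⊆ M.closure (B0 ∩ {e | w e ≤ t}) := by
        have hsub : f t' ∩ {e | w e ≤ t'} ⊆ M.closure (B0 ∩ {e | w e ≤ t}) := by
          rintro x ⟨hxf, hxt'⟩
          simp only [mem_setOf_eq] at hxt'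
          have hxE := (hf t').1.subset_ground hxf
          rcases eq_or_lt_of_le hxt' with h | h
          · exact M.subset_closure _ hXE (by rw [he1]; exact Or.inr ⟨hxf, h⟩)
          · have hx' : x ∈ {e | e ∈ M.E ∧ w e ≤ s'} :=
              ⟨hxE, hs'max _ ⟨x, hxE, rfl⟩ h⟩
            exact M.closure_subset_closure hLsub (ihbasis.subset_closure hx')
        rintro x ⟨hxE, hxt⟩
        have hx' : x ∈ {e | e ∈ M.E ∧ w e ≤ t'} := ⟨hxE, hle_t' x hxE hxt⟩
        exact M.closure_subset_closure_of_subset_closure hsub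
          (minbase_span hfin (hf t') t' hx')
      have hXfin : (B0 ∩ {e | w e ≤ t}).Finite := hfinsub _ hXE
      -- cardinality of X equals cardinality of the reference prefix basis
      have hJ : M.IsBasis (f 0 ∩ {e | w e ≤ t}) {e | e ∈ M.E ∧ w e ≤ t} :=
        minbase_prefix_basis hfin (hf 0) t
      have hXcard : (B0 ∩ {e | w e ≤ t}).ncard = (f 0 ∩ {e | w e ≤ t}).ncard := by
        rw [he1, he2, ncard_union_eq ?_ hB0L hft'C, ncard_union_eq (hdisj _) hf0L hf0C,
          hLcard, hcard_t']
        · rw [disjoint_left]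
          rintro a ⟨_, ha⟩ ⟨_, hb⟩
          simp only [mem_setOf_eq] at ha hb
          linarith
      have hindep : M.Indep (B0 ∩ {e | w e ≤ t}) := by
        obtain ⟨I, hI⟩ := M.exists_isBasis (B0 ∩ {e | w e ≤ t}) hXE
        have hIA : M.IsBasis I {e | e ∈ M.E ∧ w e ≤ t} :=
          hI.indep.isBasis_of_subset_of_subset_closure (hI.subset.trans hXA)
            (fun x hx => M.closure_subset_closure_of_subset_closure
              hI.subset_closure (hspan hx))
        have hIX : I.ncard = (B0 ∩ {e | w e ≤ t}).ncard := by
          have h := hIA.encard_eq_encard hJ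
          rw [Set.ncard_def, h, ← Set.ncard_def, ← hXcard]
        have : I = B0 ∩ {e | w e ≤ t} :=
          eq_of_subset_of_ncard_le hI.subset hIX.ge hXfin
        exact this ▸ hI.indep
      exact ⟨hindep.isBasis_of_subset_of_subset_closure hXA hspan, hwsum⟩
    · -- empty case
      have hA : {e | e ∈ M.E ∧ w e ≤ t} = (∅ : Set α) := by
        ext e
        simp only [mem_setOf_eq, mem_empty_iff_false, iff_false, not_and]
        intro heE het
        exact hne ⟨w e, ⟨e, heE, rfl⟩, het⟩
      have hB0' : B0 ∩ {e | w e ≤ t} = ∅ := by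
        rw [← subset_empty_iff, ← hA]
        exact fun x hx => ⟨hB0E hx.1, hx.2⟩
      have hf0' : f 0 ∩ {e | w e ≤ t} = ∅ := by
        rw [← subset_empty_iff, ← hA]
        exact fun x hx => ⟨(hf 0).1.subset_ground hx.1, hx.2⟩
      rw [hB0', hf0', hA]
      exact ⟨M.empty_indep.isBasis_of_subset_of_subset_closure Subset.rfl
        (empty_subset _), rfl⟩
  -- final assembly
  obtain ⟨t₀, ht₀⟩ := hWfin.bddAbove
  have h1 : B0 ∩ {e | w e ≤ t₀} = B0 :=
    inter_eq_left.mpr (fun x hx => ht₀ ⟨x, hB0E hx, rfl⟩)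
  have h2 : f 0 ∩ {e | w e ≤ t₀} = f 0 :=
    inter_eq_left.mpr (fun x hx => ht₀ ⟨x, (hf 0).1.subset_ground hx, rfl⟩)
  have h3 : {e | e ∈ M.E ∧ w e ≤ t₀} = M.E := by
    ext x
    simp only [mem_setOf_eq, and_iff_left_iff_imp]
    exact fun hx => ht₀ ⟨x, hx, rfl⟩
  obtain ⟨hb, hwsum⟩ := key _ t₀ rfl
  rw [h1, h3] at hb
  rw [h1, h2] at hwsum
  refine ⟨Matroid.isBasis_ground_iff.mp hb, fun B' hB' => ?_⟩
  rw [hwsum]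
  exact (hf 0).2 B' hB'
end

section
/- Let G be a finite connected undirected graph with nonnegative edge weights and let 𝒳 = {X_1,…,X_k} be a partition of V(G). For a cut C of G/𝒳, the following are equivalent: (a) C is both a relevant cut of G and a relevant cut of G/𝒳; (b) there exists a pair (i,j) ∈ Λ(𝒳) such that C is a minimum x_i,x_j-cut of G/𝒳. -/
variable {V : Type*} [Fintype V] [DecidableEq V]

/-- `E(W;G)`: the set of edges of `G` with exactly one endpoint in `W`. -/
def cutEdges (G : SimpleGraph V) (W : Set V) : Set (Sym2 V) :=
  {e | e ∈ G.edgeSet ∧ ∃ u v, e = s(u, v) ∧ u ∈ W ∧ v ∉ W}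

/-- The weight of an edge set. -/
noncomputable def cutWeight (w : Sym2 V → ℝ) (C : Set (Sym2 V)) : ℝ := ∑ᶠ e ∈ C, w e

/-- `C` is a cut of `G`: `C = E(W;G)` for some nonempty proper `W ⊆ V`. -/
def IsCut (G : SimpleGraph V) (C : Set (Sym2 V)) : Prop :=
  ∃ W : Set V, W.Nonempty ∧ W ≠ Set.univ ∧ C = cutEdges G W

/-- `C` is an `s,t`-cut of `G`. -/
def IsSTCut (G : SimpleGraph V) (C : Set (Sym2 V)) (s t : V) : Prop :=
  ∃ W : Set V, s ∈ W ∧ t ∉ W ∧ C = cutEdges G W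

/-- `C` is a minimum-weight `s,t`-cut of `G`. -/
def IsMinSTCut (G : SimpleGraph V) (w : Sym2 V → ℝ) (C : Set (Sym2 V)) (s t : V) : Prop :=
  IsSTCut G C s t ∧ ∀ C', IsSTCut G C' s t → cutWeight w C ≤ cutWeight w C'

/-- `C` is a relevant cut of `G`: a minimum `s,t`-cut for some pair of distinct vertices. -/
def RelCut (G : SimpleGraph V) (w : Sym2 V → ℝ) (C : Set (Sym2 V)) : Prop :=
  ∃ s t : V, s ≠ t ∧ IsMinSTCut G w C s t

/-- `λ(s,t;G)`: the minimum weight of an `s,t`-cut of `G`. -/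
noncomputable def lamST (G : SimpleGraph V) (w : Sym2 V → ℝ) (s t : V) : ℝ :=
  sInf (cutWeight w '' {C | IsSTCut G C s t})

/-- `X` is a partition of the vertex set into nonempty blocks. -/
def IsPartition (X : Set (Set V)) : Prop :=
  (∀ A ∈ X, A.Nonempty) ∧ X.PairwiseDisjoint id ∧ ⋃₀ X = Set.univ

/-- A cut of the contraction `G/X`, identified with the cut `E(⋃₀ S; G)` of `G` where `S`
is a nonempty proper subfamily of blocks of `X`. -/
def IsPartCut (G : SimpleGraph V) (X : Set (Set V)) (C : Set (Sym2 V)) : Prop :=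
  ∃ S : Set (Set V), S ⊆ X ∧ S.Nonempty ∧ S ≠ X ∧ C = cutEdges G (⋃₀ S)

/-- An `x_A,x_B`-cut of the contraction `G/X` (for blocks `A, B` of `X`). -/
def IsPartSTCut (G : SimpleGraph V) (X : Set (Set V)) (C : Set (Sym2 V))
    (A B : Set V) : Prop :=
  ∃ S : Set (Set V), S ⊆ X ∧ A ∈ S ∧ B ∉ S ∧ C = cutEdges G (⋃₀ S)

/-- `λ(x_A, x_B; G/X)`: the minimum weight of an `x_A,x_B`-cut of `G/X`. -/
noncomputable def lamPart (G : SimpleGraph V) (w : Sym2 V → ℝ) (X : Set (Set V))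
    (A B : Set V) : ℝ :=
  sInf (cutWeight w '' {C | IsPartSTCut G X C A B})

/-- `C` is a minimum `x_A,x_B`-cut of `G/X`. -/
def IsMinPartSTCut (G : SimpleGraph V) (w : Sym2 V → ℝ) (X : Set (Set V))
    (C : Set (Sym2 V)) (A B : Set V) : Prop :=
  IsPartSTCut G X C A B ∧ ∀ C', IsPartSTCut G X C' A B → cutWeight w C ≤ cutWeight w C'

/-- `λ_max(A,B;G) = max {λ(a,b;G) : a ∈ A, b ∈ B}`. -/
noncomputable def lamMax (G : SimpleGraph V) (w : Sym2 V → ℝ) (A B : Set V) : ℝ :=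
  sSup {x : ℝ | ∃ a ∈ A, ∃ b ∈ B, lamST G w a b = x}

/-- `(A,B)` is a pair of distinct blocks of `X` belonging to `Λ(X)`, i.e. with
`λ(x_A,x_B;G/X) = λ_max(A,B;G)`. -/
def LambdaPair (G : SimpleGraph V) (w : Sym2 V → ℝ) (X : Set (Set V))
    (A B : Set V) : Prop :=
  A ∈ X ∧ B ∈ X ∧ A ≠ B ∧ lamPart G w X A B = lamMax G w A B

/-- `C` is a relevant cut of the contraction `G/X`: a minimum `x_A,x_B`-cut of `G/X` for
some pair of distinct blocks `A, B` of `X`. -/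
def RelPartCut (G : SimpleGraph V) (w : Sym2 V → ℝ) (X : Set (Set V))
    (C : Set (Sym2 V)) : Prop :=
  ∃ A B : Set V, A ∈ X ∧ B ∈ X ∧ A ≠ B ∧ IsMinPartSTCut G w X C A B

section Aux

variable {G : SimpleGraph V} {w : Sym2 V → ℝ}

lemma mem_cutEdges_iff {W : Set V} {u v : V} :
    s(u, v) ∈ cutEdges G W ↔ s(u, v) ∈ G.edgeSet ∧
      ((u ∈ W ∧ v ∉ W) ∨ (v ∈ W ∧ u ∉ W)) := by
  constructor
  · rintro ⟨he, a, b, hab, ha, hb⟩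
    refine ⟨he, ?_⟩
    rw [Sym2.eq_iff] at hab
    rcases hab with ⟨rfl, rfl⟩ | ⟨rfl, rfl⟩
    · exact Or.inl ⟨ha, hb⟩
    · exact Or.inr ⟨ha, hb⟩
  · rintro ⟨he, h⟩
    rcases h with ⟨hu, hv⟩ | ⟨hv, hu⟩
    · exact ⟨he, u, v, rfl, hu, hv⟩
    · exact ⟨he, v, u, Sym2.eq_swap, hv, hu⟩

lemma cutEdges_subset (W : Set V) : cutEdges G W ⊆ G.edgeSet := fun _ he => he.1

lemma cutEdges_compl (W : Set V) : cutEdges G Wᶜ = cutEdges G W := by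
  ext e
  induction e using Sym2.ind with
  | _ u v =>
    rw [mem_cutEdges_iff, mem_cutEdges_iff]
    simp only [Set.mem_compl_iff, not_not]
    tauto

lemma cutWeight_nonneg (hw : ∀ e ∈ G.edgeSet, 0 ≤ w e)
    {C : Set (Sym2 V)} (hC : C ⊆ G.edgeSet) : 0 ≤ cutWeight w C := by
  have hfin : C.Finite := Set.toFinite C
  rw [cutWeight, ← Set.Finite.coe_toFinset hfin, finsum_mem_coe_finset]
  exact Finset.sum_nonneg fun e he => hw e (hC (hfin.mem_toFinset.mp he))

lemma bddBelow_ST (hw : ∀ e ∈ G.edgeSet, 0 ≤ w e) (s t : V) :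
    BddBelow (cutWeight w '' {C | IsSTCut G C s t}) := by
  refine ⟨0, ?_⟩
  rintro x ⟨C, ⟨W, _, _, rfl⟩, rfl⟩
  exact cutWeight_nonneg hw (cutEdges_subset W)

lemma bddBelow_Part (hw : ∀ e ∈ G.edgeSet, 0 ≤ w e) (X : Set (Set V)) (A B : Set V) :
    BddBelow (cutWeight w '' {C | IsPartSTCut G X C A B}) := by
  refine ⟨0, ?_⟩
  rintro x ⟨C, ⟨S, _, _, _, rfl⟩, rfl⟩
  exact cutWeight_nonneg hw (cutEdges_subset _)

lemma isSTCut_symm {C : Set (Sym2 V)} {s t : V} (h : IsSTCut G C s t) :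
    IsSTCut G C t s := by
  obtain ⟨W, hs, ht, rfl⟩ := h
  exact ⟨Wᶜ, ht, by simpa using hs, (cutEdges_compl W).symm⟩

lemma isMinSTCut_symm {C : Set (Sym2 V)} {s t : V} (h : IsMinSTCut G w C s t) :
    IsMinSTCut G w C t s :=
  ⟨isSTCut_symm h.1, fun C' hC' => h.2 C' (isSTCut_symm hC')⟩

lemma weight_eq_lamST (hw : ∀ e ∈ G.edgeSet, 0 ≤ w e) {C : Set (Sym2 V)} {s t : V}
    (h : IsMinSTCut G w C s t) : cutWeight w C = lamST G w s t := by
  refine le_antisymm (le_csInf ⟨_, ⟨C, h.1, rfl⟩⟩ ?_) (csInf_le (bddBelow_ST hw s t) ⟨C, h.1, rfl⟩)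
  rintro x ⟨C', hC', rfl⟩
  exact h.2 C' hC'

lemma lamST_le_cut (hw : ∀ e ∈ G.edgeSet, 0 ≤ w e) {C : Set (Sym2 V)} {s t : V}
    (h : IsSTCut G C s t) : lamST G w s t ≤ cutWeight w C :=
  csInf_le (bddBelow_ST hw s t) ⟨C, h, rfl⟩

lemma lamMax_set_finite (A B : Set V) :
    {x : ℝ | ∃ a ∈ A, ∃ b ∈ B, lamST G w a b = x}.Finite := by
  have hsub : {x : ℝ | ∃ a ∈ A, ∃ b ∈ B, lamST G w a b = x} ⊆
      (fun p : V × V => lamST G w p.1 p.2) '' Set.univ := by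
    rintro x ⟨a, _, b, _, rfl⟩
    exact ⟨(a, b), trivial, rfl⟩
  exact ((Set.toFinite _).image _).subset hsub

/-- In a connected graph, the edge set of a cut determines the vertex bipartition. -/
lemma cut_determines (hconn : G.Connected) {W1 W2 : Set V}
    (h : cutEdges G W1 = cutEdges G W2) : W1 = W2 ∨ W1 = W2ᶜ := by
  have key : ∀ u v, G.Adj u v → ((u ∈ W1 ↔ u ∈ W2) ↔ (v ∈ W1 ↔ v ∈ W2)) := by
    intro u v huv
    have hmem : (s(u, v) ∈ cutEdges G W1) ↔ (s(u, v) ∈ cutEdges G W2) := by rw [h]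
    rw [mem_cutEdges_iff, mem_cutEdges_iff] at hmem
    have he : s(u, v) ∈ G.edgeSet := huv
    tauto
  have hall : ∀ u v : V, ((u ∈ W1 ↔ u ∈ W2) ↔ (v ∈ W1 ↔ v ∈ W2)) := by
    intro u v
    obtain ⟨p⟩ := hconn u v
    induction p with
    | nil => exact Iff.rfl
    | cons hadj _ ih => exact (key _ _ hadj).trans ih
  obtain ⟨v0⟩ := hconn.nonempty
  by_cases h0 : v0 ∈ W1 ↔ v0 ∈ W2
  · left; ext u; exact ((hall u v0).mpr h0 : _)
  · right; ext u
    have := hall u v0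
    simp only [Set.mem_compl_iff]
    tauto

lemma weight_eq_lamPart (hw : ∀ e ∈ G.edgeSet, 0 ≤ w e) {X : Set (Set V)}
    {C : Set (Sym2 V)} {A B : Set V} (h : IsMinPartSTCut G w X C A B) :
    cutWeight w C = lamPart G w X A B := by
  refine le_antisymm (le_csInf ⟨_, ⟨C, h.1, rfl⟩⟩ ?_)
    (csInf_le (bddBelow_Part hw X A B) ⟨C, h.1, rfl⟩)
  rintro x ⟨C', hC', rfl⟩
  exact h.2 C' hC'

/-- Core of the forward direction. -/
lemma core_forward (hconn : G.Connected) (hw : ∀ e ∈ G.edgeSet, 0 ≤ w e)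
    {X : Set (Set V)} (hX : IsPartition X)
    {C : Set (Sym2 V)} {S : Set (Set V)} {s t : V}
    (hS : S ⊆ X) (hCS : C = cutEdges G (⋃₀ S))
    (hmin : IsMinSTCut G w C s t) (hs : s ∈ ⋃₀ S) (ht : t ∉ ⋃₀ S) :
    ∃ A B : Set V, LambdaPair G w X A B ∧ IsMinPartSTCut G w X C A B := by
  obtain ⟨A, hAS, hsA⟩ := hs
  have hAX : A ∈ X := hS hAS
  have htU : t ∈ ⋃₀ X := hX.2.2 ▸ Set.mem_univ t
  obtain ⟨B, hBX, htB⟩ := htU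
  have hBS : B ∉ S := fun hBS => ht ⟨B, hBS, htB⟩
  have hAB : A ≠ B := fun hEq => hBS (hEq ▸ hAS)
  have hCcut : IsPartSTCut G X C A B := ⟨S, hS, hAS, hBS, hCS⟩
  -- part-cuts separating A and B separate any a ∈ A, b ∈ B
  have hsep : ∀ a ∈ A, ∀ b ∈ B, ∀ C', IsPartSTCut G X C' A B → IsSTCut G C' a b := by
    rintro a ha b hb C' ⟨S', hS', hAS', hBS', rfl⟩
    refine ⟨⋃₀ S', ⟨A, hAS', ha⟩, ?_, rfl⟩
    rintro ⟨T, hTS', hbT⟩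
    have hTB : T ≠ B := fun hEq => hBS' (hEq ▸ hTS')
    exact Set.disjoint_left.mp (hX.2.1 (hS' hTS') hBX hTB) hbT hb
  have hPartNe : (cutWeight w '' {C' | IsPartSTCut G X C' A B}).Nonempty :=
    ⟨_, ⟨C, hCcut, rfl⟩⟩
  -- λ(a,b) ≤ λPart(A,B) for all a ∈ A, b ∈ B
  have hlam_le : ∀ a ∈ A, ∀ b ∈ B, lamST G w a b ≤ lamPart G w X A B := by
    intro a ha b hb
    refine le_csInf hPartNe ?_
    rintro x ⟨C', hC', rfl⟩
    exact lamST_le_cut hw (hsep a ha b hb C' hC')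
  have h3 : lamST G w s t ≤ lamMax G w A B :=
    le_csSup (lamMax_set_finite A B).bddAbove ⟨s, hsA, t, htB, rfl⟩
  have h4 : lamMax G w A B ≤ lamPart G w X A B := by
    refine csSup_le ⟨lamST G w s t, s, hsA, t, htB, rfl⟩ ?_
    rintro x ⟨a, ha, b, hb, rfl⟩
    exact hlam_le a ha b hb
  have h1 : lamPart G w X A B ≤ cutWeight w C :=
    csInf_le (bddBelow_Part hw X A B) ⟨C, hCcut, rfl⟩
  have h2 : cutWeight w C = lamST G w s t := weight_eq_lamST hw hmin
  have heq : lamPart G w X A B = cutWeight w C :=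
    le_antisymm h1 (by rw [h2]; exact h3.trans h4)
  have heq2 : lamPart G w X A B = lamMax G w A B :=
    le_antisymm (by linarith) h4
  refine ⟨A, B, ⟨hAX, hBX, hAB, heq2⟩, hCcut, ?_⟩
  intro C' hC'
  have : lamPart G w X A B ≤ cutWeight w C' :=
    csInf_le (bddBelow_Part hw X A B) ⟨C', hC', rfl⟩
  linarith

end Aux

/-- For a cut `C` of the contraction `G/X`: `C` is relevant both for `G` and for `G/X`
iff there is a pair `(A,B) ∈ Λ(X)` such that `C` is a minimum `x_A,x_B`-cut of `G/X`. -/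
theorem stmt_10 (G : SimpleGraph V) (hconn : G.Connected)
    (w : Sym2 V → ℝ) (hw : ∀ e ∈ G.edgeSet, 0 ≤ w e)
    (X : Set (Set V)) (hX : IsPartition X)
    (C : Set (Sym2 V)) (hC : IsPartCut G X C) :
    (RelCut G w C ∧ RelPartCut G w X C) ↔
      ∃ A B : Set V, LambdaPair G w X A B ∧ IsMinPartSTCut G w X C A B := by
  obtain ⟨S, hS, _hSne, _hSneX, hCS⟩ := hC
  constructor
  · rintro ⟨⟨s, t, _hst, hmin⟩, _⟩
    obtain ⟨W', hsW', htW', hCW'⟩ := hmin.1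
    have hWU : cutEdges G W' = cutEdges G (⋃₀ S) := by rw [← hCW', ← hCS]
    rcases cut_determines hconn hWU with rfl | rfl
    · exact core_forward hconn hw hX hS hCS hmin hsW' htW'
    · refine core_forward hconn hw hX hS hCS (isMinSTCut_symm hmin) ?_ ?_
      · simpa using htW'
      · simpa using hsW'
  · rintro ⟨A, B, ⟨hAX, hBX, hAB, hlam⟩, hminP⟩
    obtain ⟨S', hS', hAS', hBS', hCS'⟩ := hminP.1
    refine ⟨?_, A, B, hAX, hBX, hAB, hminP⟩
    -- pick (a, b) attaining lamMax
    obtain ⟨a0, ha0⟩ := hX.1 A hAX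
    obtain ⟨b0, hb0⟩ := hX.1 B hBX
    have hne : {x : ℝ | ∃ a ∈ A, ∃ b ∈ B, lamST G w a b = x}.Nonempty :=
      ⟨lamST G w a0 b0, a0, ha0, b0, hb0, rfl⟩
    have hmemSup : lamMax G w A B ∈ {x : ℝ | ∃ a ∈ A, ∃ b ∈ B, lamST G w a b = x} :=
      hne.csSup_mem (lamMax_set_finite A B)
    obtain ⟨a, ha, b, hb, hab⟩ := hmemSup
    have hanb : a ≠ b := by
      rintro rfl
      exact Set.disjoint_left.mp (hX.2.1 hAX hBX hAB) ha hb
    have hSTcut : IsSTCut G C a b := by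
      refine ⟨⋃₀ S', ⟨A, hAS', ha⟩, ?_, hCS'⟩
      rintro ⟨T, hTS', hbT⟩
      have hTB : T ≠ B := fun hEq => hBS' (hEq ▸ hTS')
      exact Set.disjoint_left.mp (hX.2.1 (hS' hTS') hBX hTB) hbT hb
    have hwC : cutWeight w C = lamST G w a b := by
      rw [weight_eq_lamPart hw hminP, hlam, ← hab]
    refine ⟨a, b, hanb, hSTcut, ?_⟩
    intro C' hC'
    rw [hwC]
    exact lamST_le_cut hw hC'
end

section
/- Let r ≥ 1, R = {e_1,…,e_r} ⊆ GF(2)^r the root basis, B ≠ R a basis, and let P = π(B) be the parent of B, so that P = (B \ {y}) ∪ {e_i} where y = min(B \ R) and e_i = min(R ∩ Ex_in(B; y)). Let υ ∈ Ex_in(P; e_i), z = Succ(υ), z' = Succ^{(2^{r−i})}(z), and z'' = Succ^{(2^{r−i+1})}(z). If z'' ≠ 𝟎, then at least one of z, z', z'' belongs to Ex_in(P; e_i). -/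
/-- An element: a vector in `GF(2)^r`. -/
abbrev Elt (r : ℕ) := Fin r → ZMod 2

/-- A basis: a set of `r` linearly independent vectors of `GF(2)^r`. -/
def IsBasisSet {r : ℕ} (B : Finset (Elt r)) : Prop :=
  B.card = r ∧ LinearIndependent (ZMod 2) (Subtype.val : {x // x ∈ B} → Elt r)

/-- `bin(c) = (c_1 c_2 … c_r)₂`. -/
def binOf {r : ℕ} (c : Elt r) : ℕ := ∑ i : Fin r, (c i).val * 2 ^ (r - 1 - (i : ℕ))

/-- The `i`-th standard unit vector of `GF(2)^r`. -/
def stdVec (r : ℕ) (i : Fin r) : Elt r := fun j => if j = i then 1 else 0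

/-- The root basis `R = {e_1, …, e_r}` of standard unit vectors. -/
def rootB (r : ℕ) : Finset (Elt r) := Finset.univ.image (stdVec r)

/-- `Ex_in(B; x)`: the elements `y` such that `(x,y)` is an exchange for the basis `B`,
together with `x` itself. -/
def ExIn {r : ℕ} (B : Finset (Elt r)) (x : Elt r) : Set (Elt r) :=
  {y | y ∉ B ∧ IsBasisSet (insert y (B.erase x))} ∪ {x}

/-- The all-ones vector `𝟏`. -/
def allOnes (r : ℕ) : Elt r := fun _ => 1

/-- The all-zeros vector `𝟎`. -/
def allZeros (r : ℕ) : Elt r := fun _ => 0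

/-- `Succ(c)`: the element with `bin(Succ(c)) = bin(c) + 1` if `c ∉ {𝟏, 𝟎}`, and `𝟎`
otherwise. -/
def succElt {r : ℕ} (c : Elt r) : Elt r :=
  if c = allOnes r ∨ c = allZeros r then allZeros r
  else fun i => (((binOf c + 1) / 2 ^ (r - 1 - (i : ℕ))) % 2 : ℕ)


lemma sum_two_pow (p : ℕ) : ∑ k ∈ Finset.range p, 2^k = 2^p - 1 := by
  induction p with
  | zero => simp
  | succ n ih => rw [Finset.sum_range_succ, ih]; have := Nat.one_le_two_pow (n := n); ring_nf; omega

lemma sumBits (n : ℕ) : ∀ r, ∑ k ∈ Finset.range r, (n / 2^k % 2) * 2^k = n % 2^r := by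
  intro r
  induction r with
  | zero => simp [Nat.mod_one]
  | succ m ih =>
    rw [Finset.sum_range_succ, ih, Nat.mod_pow_succ]; ring

-- extraction of bit p from a sum of bits
lemma extractBit (f : ℕ → ℕ) (hf : ∀ k, f k < 2) {p r : ℕ} (hp : p < r) :
    (∑ k ∈ Finset.range r, f k * 2^k) / 2^p % 2 = f p := by
  obtain ⟨m, rfl⟩ : ∃ m, r = p + 1 + m := ⟨r - (p+1), by omega⟩
  rw [Finset.sum_range_add, Finset.sum_range_succ]
  have hL : ∑ k ∈ Finset.range p, f k * 2^k < 2^p := by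
    calc ∑ k ∈ Finset.range p, f k * 2^k ≤ ∑ k ∈ Finset.range p, 1 * 2^k := by
          apply Finset.sum_le_sum; intro k _; have := hf k
          exact Nat.mul_le_mul_right _ (by omega)
      _ = 2^p - 1 := by simpa using sum_two_pow p
      _ < 2^p := by have := Nat.one_le_two_pow (n := p); omega
  have hH : ∑ k ∈ Finset.range m, f (p + 1 + k) * 2^(p+1+k)
      = 2^p * (2 * ∑ k ∈ Finset.range m, f (p + 1 + k) * 2^k) := by
    rw [Finset.mul_sum, Finset.mul_sum]
    apply Finset.sum_congr rfl; intro k _; ring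
  rw [hH]
  have h2p : 0 < 2^p := Nat.pow_pos (by norm_num)
  set L := ∑ k ∈ Finset.range p, f k * 2^k
  set H := 2 * ∑ k ∈ Finset.range m, f (p + 1 + k) * 2^k with hHdef
  have : (L + f p * 2^p + 2^p * H) / 2^p = f p + H := by
    rw [add_assoc, mul_comm (f p)]
    rw [← Nat.mul_add, Nat.add_mul_div_left _ _ h2p, Nat.div_eq_of_lt hL, zero_add]
  rw [this]
  have := hf p
  omega

lemma bit_high {n k p : ℕ} (hk : n / 2^k % 2 = 0) (hkp : k < p) :
    (n + 2^k) / 2^p = n / 2^p := by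
  have h2p : 0 < 2^p := Nat.pow_pos (by norm_num)
  have hx : n % 2^p + 2^k < 2^p := by
    set x := n % 2^p with hxd
    have hxk : x / 2^k % 2 = 0 := by
      have : x / 2^k = n / 2^k % 2^(p-k) := by
        rw [hxd]
        have : (2:ℕ)^p = 2^k * 2^(p-k) := by rw [← pow_add]; congr 1; omega
        rw [this, Nat.mod_mul_right_div_self]
      rw [this, Nat.mod_mod_of_dvd]
      · exact hk
      · exact dvd_pow_self 2 (by omega)
    have hxlt : x < 2^p := Nat.mod_lt _ h2p
    have hq : x / 2^(k+1) < 2^(p-k-1) := by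
      rw [Nat.div_lt_iff_lt_mul (Nat.pow_pos (by norm_num))]
      calc x < 2^p := hxlt
        _ = 2^(p-k-1) * 2^(k+1) := by rw [← pow_add]; congr 1; omega
    have hm : x % 2^(k+1) < 2^k := by
      have h1 := Nat.mod_pow_succ (x := x) (b := 2) (k := k)
      rw [hxk, Nat.mul_zero, Nat.add_zero] at h1
      have hmk : x % 2^k < 2^k := Nat.mod_lt _ (Nat.pow_pos (by norm_num))
      omega
    have hdm := Nat.div_add_mod x (2^(k+1))
    have hks : (2:ℕ)^(k+1) = 2 * 2^k := by rw [pow_succ]; ring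
    have h2peq : (2:ℕ)^p = 2^(k+1) * 2^(p-k-1) := by rw [← pow_add]; congr 1; omega
    nlinarith [hq, hm, hdm]
  have hdm := Nat.div_add_mod n (2^p)
  calc (n + 2^k) / 2^p = (2^p * (n / 2^p) + (n % 2^p + 2^k)) / 2^p := by congr 1; omega
    _ = n / 2^p + (n % 2^p + 2^k) / 2^p := by rw [Nat.mul_add_div h2p]
    _ = n / 2^p := by rw [Nat.div_eq_of_lt hx]; omega
  
lemma addBit {k n : ℕ} (hk : n / 2^k % 2 = 0) (p : ℕ) :
    (n + 2^k) / 2^p % 2 = if p = k then (n / 2^p % 2) + 1 else n / 2^p % 2 := by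
  rcases lt_trichotomy p k with h | rfl | h
  · rw [if_neg (by omega)]
    have : (2:ℕ)^k = 2^(k-p-1+1) * 2^p := by rw [← pow_add]; congr 1; omega
    rw [this, Nat.add_mul_div_right _ _ (Nat.pow_pos (by norm_num))]
    rw [pow_succ']
    omega
  · rw [if_pos rfl, Nat.add_div_right _ (Nat.pow_pos (by norm_num))]
    omega
  · rw [if_neg (by omega), bit_high hk h]

/-- vector corresponding to a number -/
def toVec (r : ℕ) (n : ℕ) : Elt r := fun j => (((n / 2 ^ (r - 1 - (j : ℕ))) % 2 : ℕ) : ZMod 2)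

/-- the bit function of `c` -/
noncomputable def bitF {r : ℕ} (c : Elt r) : ℕ → ℕ :=
  fun k => if h : k < r then (c (Fin.rev ⟨k, h⟩)).val else 0

lemma bitF_lt {r : ℕ} (c : Elt r) (k : ℕ) : bitF c k < 2 := by
  unfold bitF; split
  · exact ZMod.val_lt _
  · norm_num

lemma bitF_eval {r : ℕ} (c : Elt r) (j : Fin r) : bitF c (r - 1 - (j : ℕ)) = (c j).val := by
  have hj := j.isLt
  unfold bitF
  rw [dif_pos (show r - 1 - (j : ℕ) < r by omega)]
  have h : Fin.rev ⟨r - 1 - (j : ℕ), by omega⟩ = j := by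
    ext
    rw [Fin.val_rev]
    simp only [Fin.val_mk]
    omega
  rw [h]

lemma binOf_eq_sum {r : ℕ} (c : Elt r) :
    binOf c = ∑ k ∈ Finset.range r, bitF c k * 2 ^ k := by
  rw [Finset.sum_range fun k => bitF c k * 2 ^ k]
  unfold binOf
  apply Finset.sum_bij (fun (i : Fin r) _ => Fin.rev i)
  · intros; exact Finset.mem_univ _
  · intro a _ b _ h; exact Fin.rev_injective h
  · intro b _; exact ⟨Fin.rev b, Finset.mem_univ _, Fin.rev_rev b⟩
  · intro i _
    unfold bitF
    rw [dif_pos (Fin.rev i).isLt]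
    congr 2
    · congr 1; exact (Fin.rev_rev i).symm
    · rw [Fin.val_rev]; omega

lemma binOf_div_mod {r : ℕ} (c : Elt r) (j : Fin r) :
    binOf c / 2 ^ (r - 1 - (j : ℕ)) % 2 = (c j).val := by
  have hj := j.isLt
  rw [binOf_eq_sum, extractBit (bitF c) (bitF_lt c) (p := r - 1 - (j : ℕ)) (by omega), bitF_eval]

lemma toVec_binOf {r : ℕ} (c : Elt r) : toVec r (binOf c) = c := by
  funext j
  rw [toVec, binOf_div_mod]
  simp [ZMod.natCast_val]

lemma binOf_toVec {r n : ℕ} : binOf (toVec r n) = n % 2 ^ r := by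
  rw [binOf_eq_sum, ← sumBits n r]
  apply Finset.sum_congr rfl
  intro k hk
  rw [Finset.mem_range] at hk
  congr 1
  unfold bitF
  rw [dif_pos hk, toVec]
  rw [ZMod.val_natCast]
  rw [Fin.val_rev]
  have : r - 1 - (r - (k + 1)) = k := by omega
  rw [this]
  omega

lemma binOf_lt {r : ℕ} (c : Elt r) : binOf c < 2 ^ r := by
  rw [binOf_eq_sum]
  calc ∑ k ∈ Finset.range r, bitF c k * 2 ^ k ≤ ∑ k ∈ Finset.range r, 1 * 2 ^ k := by
        apply Finset.sum_le_sum; intro k _; have := bitF_lt c k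
        exact Nat.mul_le_mul_right _ (by omega)
    _ = 2 ^ r - 1 := by simpa using sum_two_pow r
    _ < 2 ^ r := by have := Nat.one_le_two_pow (n := r); omega

lemma eq_allOnes_of_binOf {r : ℕ} (c : Elt r) (h : binOf c = 2 ^ r - 1) : c = allOnes r := by
  by_contra hc
  have : ∃ j, c j ≠ 1 := by
    by_contra h'
    push_neg at h'
    exact hc (funext h')
  obtain ⟨j, hj⟩ := this
  have hj0 : (c j).val = 0 := by
    have := ZMod.val_lt (c j)
    interval_cases h : (c j).val
    · rfl
    · exfalso; apply hj; have := ZMod.natCast_rightInverse (n := 2) (c j); rw [← this, h]; rfl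
  have hlt : binOf c < 2 ^ r - 1 := by
    rw [binOf_eq_sum, ← sum_two_pow r]
    apply Finset.sum_lt_sum (fun k _ => by have := bitF_lt c k; nlinarith [Nat.pow_pos (n := k) (show 0 < 2 by norm_num)])
    refine ⟨r - 1 - (j : ℕ), Finset.mem_range.2 (by omega), ?_⟩
    rw [bitF_eval, hj0]
    simpa using Nat.pow_pos (n := r - 1 - (j:ℕ)) (show 0 < 2 by norm_num)
  omega

lemma succElt_spec {r : ℕ} (c : Elt r) (h1 : c ≠ allOnes r) (h0 : c ≠ allZeros r) :
    succElt c = toVec r (binOf c + 1) := by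
  rw [succElt, if_neg (by tauto)]; rfl

lemma succElt_allZeros {r : ℕ} : succElt (allZeros r) = allZeros r := if_pos (Or.inr rfl)

lemma chainLemma {r : ℕ} (z : Elt r) (T : ℕ) (h : succElt^[T] z ≠ allZeros r) :
    ∀ t, t ≤ T → succElt^[t] z = toVec r (binOf z + t) ∧ binOf z + t < 2 ^ r := by
  intro t
  induction t with
  | zero => intro _; simpa [toVec_binOf] using binOf_lt z
  | succ t ih =>
    intro ht
    obtain ⟨hc, hlt⟩ := ih (by omega)
    set c := succElt^[t] z with hcdef
    have hnz : c ≠ allZeros r := by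
      intro h0
      apply h
      have : succElt^[T] z = succElt^[T - t] (succElt^[t] z) := by
        rw [← Function.iterate_add_apply]; congr 1; omega
      rw [this, ← hcdef, h0, Function.iterate_fixed succElt_allZeros]
    have hno : c ≠ allOnes r := by
      intro h1
      apply h
      have : succElt^[T] z = succElt^[T - (t+1)] (succElt (succElt^[t] z)) := by
        rw [← Function.iterate_succ_apply, ← Function.iterate_add_apply]; congr 1; omega
      rw [this, ← hcdef, h1]
      have : succElt (allOnes r) = allZeros r := if_pos (Or.inl rfl)
      rw [this, Function.iterate_fixed succElt_allZeros]
    have hbc : binOf c = binOf z + t := by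
      rw [hc, binOf_toVec, Nat.mod_eq_of_lt hlt]
    have hne : binOf z + t ≠ 2 ^ r - 1 := by
      intro he
      exact hno (eq_allOnes_of_binOf c (hbc.trans he))
    constructor
    · rw [Function.iterate_succ_apply', ← hcdef, succElt_spec c hno hnz, hbc, Nat.add_assoc]
    · omega

lemma toVec_add_stdVec {r : ℕ} (i : Fin r) (n : ℕ) (hb : n / 2 ^ (r - 1 - (i : ℕ)) % 2 = 0) :
    toVec r (n + 2 ^ (r - 1 - (i : ℕ))) = toVec r n + stdVec r i := by
  funext j
  have hji : (r - 1 - (j : ℕ) = r - 1 - (i : ℕ)) ↔ j = i := by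
    constructor
    · intro h; ext; omega
    · intro h; rw [h]
  rw [toVec]
  show (((n + 2 ^ (r - 1 - (i : ℕ))) / 2 ^ (r - 1 - (j : ℕ)) % 2 : ℕ) : ZMod 2)
      = toVec r n j + stdVec r i j
  rw [addBit hb (r - 1 - (j : ℕ))]
  by_cases h : j = i
  · rw [if_pos (hji.2 h), toVec, stdVec, if_pos h]
    subst h
    rw [hb]
    norm_num
  · rw [if_neg (fun hc => h (hji.1 hc)), toVec, stdVec, if_neg h]
    simp

lemma isBasisSet_coe {r : ℕ} {B : Finset (Elt r)} (hB : IsBasisSet B) :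
    LinearIndependent (ZMod 2) (Subtype.val : (↑B : Set (Elt r)) → Elt r) := hB.2

lemma erase_indep {r : ℕ} {B : Finset (Elt r)} (hB : IsBasisSet B) (x : Elt r) :
    LinearIndependent (ZMod 2) (Subtype.val : (↑(B.erase x) : Set (Elt r)) → Elt r) := by
  apply (show LinearIndepOn (ZMod 2) id (↑B : Set (Elt r)) from isBasisSet_coe hB).mono
  intro a ha
  exact Finset.mem_of_mem_erase ha

lemma basis_insert_erase {r : ℕ} {B : Finset (Elt r)} (hB : IsBasisSet B) {y : Elt r}
    (hy : y ∈ B) {w : Elt r}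
    (hw : w ∉ Submodule.span (ZMod 2) ((B.erase y : Finset (Elt r)) : Set (Elt r)))
    (hwB : w ∉ B) : IsBasisSet (insert w (B.erase y)) := by
  constructor
  · rw [Finset.card_insert_of_notMem (fun hc => hwB (Finset.mem_of_mem_erase hc)),
      Finset.card_erase_of_mem hy, hB.1]
    have : 1 ≤ r := by
      rw [← hB.1]
      exact Finset.card_pos.2 ⟨y, hy⟩
    omega
  · have hwe : w ∉ ((B.erase y : Finset (Elt r)) : Set (Elt r)) := by
      intro hc
      exact hwB (Finset.mem_of_mem_erase hc)
    have := (linearIndepOn_id_insert hwe).2 ⟨erase_indep hB y, hw⟩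
    have hcoe : (insert w ((B.erase y : Finset (Elt r)) : Set (Elt r)))
        = ((insert w (B.erase y) : Finset (Elt r)) : Set (Elt r)) := by
      rw [Finset.coe_insert]
    rw [hcoe] at this
    exact this

lemma not_mem_span_erase {r : ℕ} {P : Finset (Elt r)} (hP : IsBasisSet P) {x : Elt r}
    (hx : x ∈ P) :
    x ∉ Submodule.span (ZMod 2) ((P.erase x : Finset (Elt r)) : Set (Elt r)) := by
  have hxe : x ∉ ((P.erase x : Finset (Elt r)) : Set (Elt r)) := by
    intro hc
    exact (Finset.ne_of_mem_erase hc) rfl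
  have hcoe : (insert x ((P.erase x : Finset (Elt r)) : Set (Elt r)))
      = ((P : Finset (Elt r)) : Set (Elt r)) := by
    rw [← Finset.coe_insert, Finset.insert_erase hx]
  have : LinearIndependent (ZMod 2)
      (Subtype.val : (insert x ((P.erase x : Finset (Elt r)) : Set (Elt r)) : Set (Elt r)) → Elt r) := by
    rw [hcoe]
    exact isBasisSet_coe hP
  exact ((linearIndepOn_id_insert hxe).1 this).2

lemma mem_ExIn_of_not_mem_span {r : ℕ} {P : Finset (Elt r)} (hP : IsBasisSet P) {x : Elt r}
    (hx : x ∈ P) {w : Elt r}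
    (hw : w ∉ Submodule.span (ZMod 2) ((P.erase x : Finset (Elt r)) : Set (Elt r))) :
    w ∈ ExIn P x := by
  by_cases hwx : w = x
  · right; exact hwx
  · left
    have hwP : w ∉ P := by
      intro hc
      exact hw (Submodule.subset_span (by exact_mod_cast Finset.mem_erase.2 ⟨hwx, hc⟩))
    exact ⟨hwP, basis_insert_erase hP hx hw hwP⟩

lemma stdVec_injective (r : ℕ) : Function.Injective (stdVec r) := by
  intro a b h
  by_contra hab
  have := congrFun h a
  rw [stdVec, stdVec, if_pos rfl, if_neg hab] at this
  exact one_ne_zero this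

lemma card_rootB (r : ℕ) : (rootB r).card = r := by
  rw [rootB, Finset.card_image_of_injective _ (stdVec_injective r), Finset.card_univ, Fintype.card_fin]

lemma exists_root_exchange {r : ℕ} {B : Finset (Elt r)} (hB : IsBasisSet B) {y : Elt r}
    (hy : y ∈ B) (hyR : y ∉ rootB r) :
    ∃ e ∈ rootB r, e ∉ B ∧ IsBasisSet (insert e (B.erase y)) := by
  set H := Submodule.span (ZMod 2) ((B.erase y : Finset (Elt r)) : Set (Elt r)) with hH
  have hr1 : 1 ≤ r := by
    rw [← hB.1]; exact Finset.card_pos.2 ⟨y, hy⟩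
  have hHne : H ≠ ⊤ := by
    intro hc
    have h1 : Module.finrank (ZMod 2) H ≤ r - 1 := by
      calc Module.finrank (ZMod 2) H ≤ (B.erase y).card := finrank_span_finset_le_card _
        _ = r - 1 := by rw [Finset.card_erase_of_mem hy, hB.1]
    rw [hc] at h1
    rw [finrank_top] at h1
    have : Module.finrank (ZMod 2) (Elt r) = r := by simp [Module.finrank_pi]
    omega
  have hex : ∃ j : Fin r, stdVec r j ∉ H := by
    by_contra hc
    push_neg at hc
    apply hHne
    rw [eq_top_iff, ← (Pi.basisFun (ZMod 2) (Fin r)).span_eq]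
    apply Submodule.span_le.2
    rintro v ⟨j, rfl⟩
    have : (Pi.basisFun (ZMod 2) (Fin r)) j = stdVec r j := by
      funext m
      simp only [Pi.basisFun_apply, stdVec, Pi.single_apply]
    rw [this]
    exact hc j
  obtain ⟨j, hj⟩ := hex
  have hjB : stdVec r j ∉ B := by
    intro hc
    have hne : stdVec r j ≠ y := fun h => hyR (h ▸ Finset.mem_image_of_mem _ (Finset.mem_univ j))
    exact hj (Submodule.subset_span (by exact_mod_cast Finset.mem_erase.2 ⟨hne, hc⟩))
  exact ⟨stdVec r j, Finset.mem_image_of_mem _ (Finset.mem_univ j), hjB,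
    basis_insert_erase hB hy hj hjB⟩

open Classical in
/-- The `≺`-minimum element of a set of elements (junk value if no minimum exists). -/
noncomputable def minElt {r : ℕ} (P : Set (Elt r)) : Elt r :=
  if h : ∃ c, c ∈ P ∧ ∀ d ∈ P, binOf c ≤ binOf d then h.choose else allZeros r

/-- The parent `π(B) = (B \ {min(B \ R)}) ∪ {min(R ∩ Ex_in(B; min(B \ R)))}` of a basis
`B ≠ R`. -/
noncomputable def parentB {r : ℕ} (B : Finset (Elt r)) : Finset (Elt r) :=
  insert (minElt ((↑(rootB r) : Set (Elt r)) ∩ ExIn B (minElt ((↑B : Set (Elt r)) \ ↑(rootB r)))))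
    (B.erase (minElt ((↑B : Set (Elt r)) \ ↑(rootB r))))

lemma minElt_spec {r : ℕ} {P : Set (Elt r)} (h : P.Nonempty) :
    minElt P ∈ P ∧ ∀ d ∈ P, binOf (minElt P) ≤ binOf d := by
  have hfin : P.Finite := Set.toFinite P
  have hex : ∃ c, c ∈ P ∧ ∀ d ∈ P, binOf c ≤ binOf d := by
    obtain ⟨c, hc, hmin⟩ := Set.exists_min_image P binOf hfin h
    exact ⟨c, hc, hmin⟩
  rw [minElt, dif_pos hex]
  exact hex.choose_spec


/-- Let `B ≠ R` be a basis with parent `P = π(B) = (B \ {y}) ∪ {e_i}`, where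
`y = min(B \ R)` and `e_i = min(R ∩ Ex_in(B; y))`. Let `υ ∈ Ex_in(P; e_i)`,
`z = Succ(υ)`, `z' = Succ^(2^(r-i))(z)` and `z'' = Succ^(2^(r-i+1))(z)` (with the paper's
1-based index of `e_i` being `i + 1` for `i : Fin r`). If `z'' ≠ 𝟎`, then at least one
of `z`, `z'`, `z''` belongs to `Ex_in(P; e_i)`. -/
theorem stmt_16 (r : ℕ) (hr : 1 ≤ r) (B : Finset (Elt r))
    (hB : IsBasisSet B) (hne : B ≠ rootB r)
    (y : Elt r) (hy : y = minElt ((↑B : Set (Elt r)) \ ↑(rootB r)))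
    (i : Fin r) (hi : stdVec r i = minElt ((↑(rootB r) : Set (Elt r)) ∩ ExIn B y))
    (P : Finset (Elt r)) (hP : P = parentB B)
    (hPform : P = insert (stdVec r i) (B.erase y))
    (υ : Elt r) (hυ : υ ∈ ExIn P (stdVec r i))
    (z z' z'' : Elt r) (hz : z = succElt υ)
    (hz' : z' = succElt^[2 ^ (r - 1 - (i : ℕ))] z)
    (hz'' : z'' = succElt^[2 ^ (r - (i : ℕ))] z)
    (hzz : z'' ≠ allZeros r) :
    z ∈ ExIn P (stdVec r i) ∨ z' ∈ ExIn P (stdVec r i) ∨ z'' ∈ ExIn P (stdVec r i) := by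
  classical
  have hcardR : (rootB r).card = r := card_rootB r
  have hBR : ((↑B : Set (Elt r)) \ ↑(rootB r)).Nonempty := by
    rw [Set.diff_nonempty]
    intro hsub
    apply hne
    exact Finset.eq_of_subset_of_card_le (by exact_mod_cast hsub) (by rw [hcardR, hB.1])
  obtain ⟨hymem, -⟩ := minElt_spec hBR
  rw [← hy] at hymem
  obtain ⟨hyB, hyR⟩ := hymem
  have hyB' : y ∈ B := hyB
  have hyR' : y ∉ rootB r := hyR
  have hEx : ((↑(rootB r) : Set (Elt r)) ∩ ExIn B y).Nonempty := by
    obtain ⟨e, heR, heB, hbasis⟩ := exists_root_exchange hB hyB' hyR'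
    exact ⟨e, heR, Or.inl ⟨heB, hbasis⟩⟩
  obtain ⟨himem, -⟩ := minElt_spec hEx
  rw [← hi] at himem
  obtain ⟨hiR, hiEx⟩ := himem
  have hPbasis : IsBasisSet P := by
    rcases hiEx with ⟨hnB, hbas⟩ | heq
    · rw [hPform]; exact hbas
    · rw [Set.mem_singleton_iff] at heq
      rw [heq] at hiR
      exact absurd hiR hyR'
  have hxP : stdVec r i ∈ P := by rw [hPform]; exact Finset.mem_insert_self _ _
  set S := Submodule.span (ZMod 2) ((P.erase (stdVec r i) : Finset (Elt r)) : Set (Elt r)) with hS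
  have heS : stdVec r i ∉ S := not_mem_span_erase hPbasis hxP
  have hir := i.isLt
  have hrk : r - (i : ℕ) = (r - 1 - (i : ℕ)) + 1 := by omega
  set k := r - 1 - (i : ℕ) with hk
  have hT : succElt^[2 ^ (k + 1)] z ≠ allZeros r := by
    rw [← hrk, ← hz'']; exact hzz
  have hchain := chainLemma z (2 ^ (k + 1)) hT
  have hzeq : z = toVec r (binOf z) := (toVec_binOf z).symm
  have hz'eq : z' = toVec r (binOf z + 2 ^ k) := by
    rw [hz']
    exact (hchain (2 ^ k) (Nat.pow_le_pow_right (by norm_num) (by omega))).1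
  have hz''eq := hchain (2 ^ (k + 1)) le_rfl
  rw [← hrk, ← hz''] at hz''eq
  obtain ⟨hz''v, hz''lt⟩ := hz''eq
  set N := binOf z with hN
  have key : ∀ a b : Elt r, b = a + stdVec r i → (a ∉ S ∨ b ∉ S) := by
    intro a b hab
    by_contra hc
    push_neg at hc
    obtain ⟨haS, hbS⟩ := hc
    apply heS
    have he : stdVec r i = a + b := by
      rw [hab]
      funext m
      show stdVec r i m = a m + (a m + stdVec r i m)
      rw [← add_assoc, CharTwo.add_self_eq_zero, zero_add]
    rw [he]
    exact Submodule.add_mem _ haS hbS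
  have hbit2 : N / 2 ^ k % 2 = 0 ∨ N / 2 ^ k % 2 = 1 := by omega
  rcases hbit2 with hb | hb
  · have hz'add : z' = z + stdVec r i := by
      rw [hz'eq, hzeq]
      exact toVec_add_stdVec i N hb
    rcases key z z' hz'add with h | h
    · exact Or.inl (mem_ExIn_of_not_mem_span hPbasis hxP h)
    · exact Or.inr (Or.inl (mem_ExIn_of_not_mem_span hPbasis hxP h))
  · have hb2 : (N + 2 ^ k) / 2 ^ k % 2 = 0 := by
      rw [Nat.add_div_right _ (Nat.pow_pos (by norm_num))]
      omega
    have hz''add : z'' = z' + stdVec r i := by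
      rw [hz''v, hz'eq, hrk]
      have harith : N + 2 ^ (k + 1) = (N + 2 ^ k) + 2 ^ k := by rw [pow_succ]; ring
      rw [harith]
      exact toVec_add_stdVec i (N + 2 ^ k) hb2
    rcases key z' z'' hz''add with h | h
    · exact Or.inr (Or.inl (mem_ExIn_of_not_mem_span hPbasis hxP h))
    · exact Or.inr (Or.inr (mem_ExIn_of_not_mem_span hPbasis hxP h))
end
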